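/- arXiv:1611.04370 — 5 statements merged into one kernel-verified Lean document; each statement's English description precedes it below -/
import Mathlib

section
/- Let G be a locally finite graph and e an edge of G. If the set Σ(G) of lengths of maximal internally isolated paths in G is finite, then Σ(G − e) is also finite. -/
open SimpleGraph

variable {V W U : Type*}

/-- A walk is a *maximal internally isolated path* if it is a path, its endpoints have
degree `≠ 2`, and all internal vertices have degree `2`. -/
def IsMiiPath (G : SimpleGraph V) {u v : V} (p : G.Walk u v) : Prop :=
  p.IsPath ∧ (G.neighborSet u).ncard ≠ 2 ∧ (G.neighborSet v).ncard ≠ 2 ∧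
    ∀ w ∈ p.support, w ≠ u → w ≠ v → (G.neighborSet w).ncard = 2

/-- The mii-spectrum of a graph: lengths of its maximal internally isolated paths. -/
def miiSpectrum (G : SimpleGraph V) : Set ℕ :=
  {k | ∃ (u v : V) (p : G.Walk u v), IsMiiPath G p ∧ p.length = k}

/-- The space of ends of a graph: compatible choices of a component of the complement of
each finite vertex set. -/
def EndSpace (G : SimpleGraph V) : Type _ :=
  {f : ∀ K : Finset V, G.ComponentCompl (K : Set V) //
    ∀ (K L : Finset V) (h : K ⊆ L), (f L).hom (by exact_mod_cast h) = f K}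

instance (G : SimpleGraph V) (K : Set V) : TopologicalSpace (G.ComponentCompl K) := ⊥

instance (G : SimpleGraph V) : TopologicalSpace (EndSpace G) :=
  instTopologicalSpaceSubtype

/-- A graph is one-ended if it has exactly one end. -/
def OneEnded (G : SimpleGraph V) : Prop :=
  ∃ e : EndSpace G, ∀ e' : EndSpace G, e' = e

/-- An end is free if it is determined by its component outside some finite vertex set. -/
def IsFreeEnd {G : SimpleGraph V} (e : EndSpace G) : Prop :=
  ∃ K : Finset V, ∀ e' : EndSpace G, e'.1 K = e.1 K → e' = e

/-- The set of ends lying in the closure of a vertex set `X`. -/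
def endBoundary (G : SimpleGraph V) (X : Set V) : Set (EndSpace G) :=
  {e | ∀ K : Finset V, ((e.1 K).supp ∩ X).Infinite}

/-- The disjoint union of two graphs. -/
def sumGraph (G : SimpleGraph V) (F : SimpleGraph W) : SimpleGraph (V ⊕ W) where
  Adj x y := (∃ a b, x = Sum.inl a ∧ y = Sum.inl b ∧ G.Adj a b) ∨
    (∃ a b, x = Sum.inr a ∧ y = Sum.inr b ∧ F.Adj a b)
  symm := by
    constructor
    rintro x y (⟨a, b, rfl, rfl, h⟩ | ⟨a, b, rfl, rfl, h⟩)
    · exact Or.inl ⟨b, a, rfl, rfl, h.symm⟩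
    · exact Or.inr ⟨b, a, rfl, rfl, h.symm⟩
  loopless := by
    constructor
    rintro x (⟨a, b, rfl, h, hab⟩ | ⟨a, b, rfl, h, hab⟩) <;>
      · cases h; exact hab.ne rfl

open Classical in
/-- The setoid identifying each `v ∈ D` (in the left graph) with `ψ v` (in the right one). -/
noncomputable def glueSetoid (D : Set V) (ψ : V → W) : Setoid (V ⊕ W) :=
  Setoid.ker (Sum.elim (fun v => if v ∈ D then Sum.inr (ψ v) else (Sum.inl v : V ⊕ W)) Sum.inr)

/-- The gluing sum `G ⊕_ψ F` of two graphs along a partial map `ψ` with domain `D`. -/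
noncomputable def gluingSum (G : SimpleGraph V) (F : SimpleGraph W) (D : Set V) (ψ : V → W) :
    SimpleGraph (Quotient (glueSetoid D ψ)) :=
  SimpleGraph.fromRel (fun a b => ∃ x y : V ⊕ W,
    a = Quotient.mk (glueSetoid D ψ) x ∧ b = Quotient.mk (glueSetoid D ψ) y ∧
      (sumGraph G F).Adj x y)

/-- Two graphs are hypomorphic if there is a vertex bijection `φ` such that deleting `v`
and `φ v` always yields isomorphic graphs. -/
def Hypomorphic (G : SimpleGraph V) (H : SimpleGraph W) : Prop :=
  ∃ φ : V ≃ W, ∀ v : V,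
    Nonempty ((G.induce {u | u ≠ v}) ≃g (H.induce {u | u ≠ φ v}))

/-- The quotient setoid collapsing a subset `A` to a single point. -/
def collapseSetoid {X : Type*} (A : Set X) : Setoid X where
  r a b := a = b ∨ (a ∈ A ∧ b ∈ A)
  iseqv := by
    constructor
    · exact fun a => Or.inl rfl
    · rintro a b (rfl | ⟨ha, hb⟩); exacts [Or.inl rfl, Or.inr ⟨hb, ha⟩]
    · rintro a b c (rfl | ⟨ha, hb⟩) (rfl | ⟨hb', hc⟩)
      exacts [Or.inl rfl, Or.inr ⟨hb', hc⟩, Or.inr ⟨ha, hb⟩, Or.inr ⟨ha, hc⟩]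

/-- The one-way infinite path (ray) on `ℕ`. -/
def rayGraph : SimpleGraph ℕ :=
  SimpleGraph.fromRel (fun m n => n = m + 1)

/-- `r : ℕ → V` is a ray in `G`. -/
structure IsRay (G : SimpleGraph V) (r : ℕ → V) : Prop where
  inj : Function.Injective r
  adj : ∀ n, G.Adj (r n) (r (n + 1))

/-- Two rays are equivalent if for every finite vertex set `S` they have tails lying in,
and connected within, the same component of `G - S`. -/
def RayEquiv (G : SimpleGraph V) (r r' : ℕ → V) : Prop :=
  ∀ S : Finset V, ∃ n n' : ℕ,
    (∀ k ≥ n, r k ∉ (S : Set V)) ∧ (∀ k ≥ n', r' k ∉ (S : Set V)) ∧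
    ∃ (h : r n ∈ ((S : Set V))ᶜ) (h' : r' n' ∈ ((S : Set V))ᶜ),
      (G.induce ((S : Set V))ᶜ).Reachable ⟨r n, h⟩ ⟨r' n', h'⟩

/-!
An mii-path of `G - e` that avoids both ends of `e` is an mii-path of `G`, since it sees the
same degrees. An mii-path through a vertex `w` splits at `w` into two paths from `w`, each of
which runs through degree-2 vertices until it first reaches a vertex of degree `≠ 2`; the
length of such a path is determined by its first step. So the length of an mii-path through
`w` is a sum of two values out of finitely many, one for each neighbour of `w` (or `0`), when
`w` has finite degree.
-/

theorem Set.eq_of_ncard_eq_two {S : Set V} (h : S.ncard = 2) {a x y : V}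
    (ha : a ∈ S) (hx : x ∈ S) (hy : y ∈ S) (hxa : x ≠ a) (hya : y ≠ a) : x = y := by
  obtain ⟨p, q, hpq, rfl⟩ := Set.ncard_eq_two.mp h
  simp only [Set.mem_insert_iff, Set.mem_singleton_iff] at ha hx hy
  rcases ha with rfl | rfl <;> rcases hx with rfl | rfl <;> rcases hy with rfl | rfl <;> simp_all

section

open scoped Pointwise

variable {G H : SimpleGraph V} {a b c u v w : V}

/-- One of the two halves, read from `a`, into which an mii-path splits at one of its vertices
`a`. -/
structure IsMiiTail (G : SimpleGraph V) {a b : V} (p : G.Walk a b) : Prop where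
  isPath : p.IsPath
  ncard_end_ne_two : (G.neighborSet b).ncard ≠ 2
  ncard_eq_two : ∀ z ∈ p.support, z ≠ a → z ≠ b → (G.neighborSet z).ncard = 2

def miiTailLengths (G : SimpleGraph V) (a : V) : Set ℕ :=
  {n | ∃ (b : V) (p : G.Walk a b), IsMiiTail G p ∧ p.length = n}

theorem IsMiiTail.of_cons {h : G.Adj a u} {p : G.Walk u b} (hp : IsMiiTail G (.cons h p)) :
    IsMiiTail G p where
  isPath := hp.isPath.of_cons
  ncard_end_ne_two := hp.ncard_end_ne_two
  ncard_eq_two z hz hzu hzb :=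
    hp.ncard_eq_two z (by simp [hz]) (fun hza => ((Walk.cons_isPath_iff _ _).1 hp.isPath).2
      (hza ▸ hz)) hzb

theorem IsMiiTail.length_eq_of_snd_eq {p : G.Walk a b} {q : G.Walk a c} (hp : IsMiiTail G p)
    (hq : IsMiiTail G q) (hpn : ¬p.Nil) (hqn : ¬q.Nil) (h : p.snd = q.snd) :
    p.length = q.length := by
  induction p with
  | nil => exact absurd .nil hpn
  | @cons a u b hau p ih =>
    cases q with
    | nil => exact absurd .nil hqn
    | cons hau' q =>
      rw [Walk.snd_cons, Walk.snd_cons] at h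
      subst h
      have hap : a ∉ p.support := ((Walk.cons_isPath_iff _ _).1 hp.isPath).2
      have haq : a ∉ q.support := ((Walk.cons_isPath_iff _ _).1 hq.isPath).2
      by_cases hu : (G.neighborSet u).ncard = 2
      · -- `u` has degree two, so both paths leave it through its neighbour other than `a`
        have hpn' : ¬p.Nil := fun hn => hp.ncard_end_ne_two (hn.eq ▸ hu)
        have hqn' : ¬q.Nil := fun hn => hq.ncard_end_ne_two (hn.eq ▸ hu)
        have hsnd : p.snd = q.snd := Set.eq_of_ncard_eq_two hu hau.symm (p.adj_snd hpn')
          (q.adj_snd hqn') (fun h => hap (h ▸ List.mem_of_mem_tail (p.snd_mem_tail_support hpn')))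
          (fun h => haq (h ▸ List.mem_of_mem_tail (q.snd_mem_tail_support hqn')))
        simp [ih hp.of_cons hq.of_cons hpn' hqn' hsnd]
      · have hub : u = b := by
          by_contra hub
          exact hu (hp.ncard_eq_two u (by simp) hau.ne' hub)
        have huc : u = c := by
          by_contra huc
          exact hu (hq.ncard_eq_two u (by simp) hau.ne' huc)
        rw [Walk.length_cons, Walk.length_cons,
          Walk.length_eq_zero_iff.mpr (hp.of_cons.isPath.nil_iff_eq.mpr hub),
          Walk.length_eq_zero_iff.mpr (hq.of_cons.isPath.nil_iff_eq.mpr huc)]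

theorem finite_miiTailLengths (ha : (G.neighborSet a).Finite) : (miiTailLengths G a).Finite := by
  let byFirstStep (u : V) : Set ℕ :=
    {n | ∃ (b : V) (p : G.Walk a b), IsMiiTail G p ∧ ¬p.Nil ∧ p.snd = u ∧ p.length = n}
  have hsub : ∀ u, (byFirstStep u).Subsingleton := by
    rintro u _ ⟨b, p, hp, hpn, rfl, rfl⟩ _ ⟨c, q, hq, hqn, hpq, rfl⟩
    exact hp.length_eq_of_snd_eq hq hpn hqn hpq.symm
  refine ((ha.biUnion fun u _ => (hsub u).finite).insert 0).subset ?_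
  rintro _ ⟨b, p, hp, rfl⟩
  by_cases hpn : p.Nil
  · exact .inl (Walk.length_eq_zero_iff.mpr hpn)
  · exact .inr (Set.mem_biUnion (p.adj_snd hpn) ⟨b, p, hp, hpn, rfl, rfl⟩)

theorem SimpleGraph.Walk.IsPath.eq_of_mem_support_append {p : G.Walk u w} {q : G.Walk w v}
    (h : (p.append q).IsPath) {z : V} (hzp : z ∈ p.support) (hzq : z ∈ q.support) : z = w := by
  have hdisj := (List.nodup_append'.mp (Walk.support_append p q ▸ h.support_nodup)).2.2
  rw [← Walk.cons_tail_support, List.mem_cons] at hzq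
  exact hzq.resolve_right (hdisj hzp)

theorem IsMiiPath.reverse {p : G.Walk u v} (hp : IsMiiPath G p) : IsMiiPath G p.reverse :=
  ⟨hp.1.reverse, hp.2.2.1, hp.2.1, fun z hz hzv hzu =>
    hp.2.2.2 z (by simpa using hz) hzu hzv⟩

theorem IsMiiPath.isMiiTail_append_right {p : G.Walk u w} {q : G.Walk w v}
    (h : IsMiiPath G (p.append q)) : IsMiiTail G q where
  isPath := h.1.of_append_right
  ncard_end_ne_two := h.2.2.1
  ncard_eq_two z hz hzw hzv := h.2.2.2 z (Walk.mem_support_append_iff _ _ |>.mpr (.inr hz))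
    (fun hzu => hzw (h.1.eq_of_mem_support_append (hzu ▸ p.start_mem_support) hz)) hzv

theorem IsMiiPath.isMiiTail_append_left {p : G.Walk u w} {q : G.Walk w v}
    (h : IsMiiPath G (p.append q)) : IsMiiTail G p.reverse := by
  have h' := h.reverse
  rw [Walk.reverse_append] at h'
  exact h'.isMiiTail_append_right

theorem IsMiiPath.length_mem_add {p : G.Walk u v} (hp : IsMiiPath G p) (hw : w ∈ p.support) :
    p.length ∈ miiTailLengths G w + miiTailLengths G w := by
  obtain ⟨q, r, rfl⟩ := Walk.mem_support_iff_exists_append.mp hw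
  rw [Walk.length_append, ← Walk.length_reverse q]
  exact Set.add_mem_add ⟨u, _, hp.isMiiTail_append_left, rfl⟩
    ⟨v, r, hp.isMiiTail_append_right, rfl⟩

theorem IsMiiPath.length_mem_miiSpectrum_of_le (hHG : H ≤ G) {p : H.Walk u v}
    (hp : IsMiiPath H p) (hN : ∀ z ∈ p.support, H.neighborSet z = G.neighborSet z) :
    p.length ∈ miiSpectrum G := by
  refine ⟨u, v, p.mapLe hHG, ⟨(Walk.isPath_mapLe hHG).mpr hp.1, ?_, ?_, ?_⟩,
    p.length_mapLe hHG⟩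
  · exact hN u p.start_mem_support ▸ hp.2.1
  · exact hN v p.end_mem_support ▸ hp.2.2.1
  · intro z hz hzu hzv
    rw [Walk.support_mapLe_eq_support] at hz
    exact hN z hz ▸ hp.2.2.2 z hz hzu hzv

theorem SimpleGraph.neighborSet_deleteEdges_of_notMem {x y z : V} (hx : z ≠ x) (hy : z ≠ y) :
    (G.deleteEdges {s(x, y)}).neighborSet z = G.neighborSet z := by
  ext b
  simp [hx, hy]

end

theorem miiSpectrum_finite_deleteEdge_general (G : SimpleGraph V)
    (hlf : ∀ v, (G.neighborSet v).Finite)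
    (e : Sym2 V)
    (hfin : (miiSpectrum G).Finite) :
    (miiSpectrum (G.deleteEdges {e})).Finite := by
  induction e using Sym2.ind with | _ x y =>
  have hlf' (z : V) : ((G.deleteEdges {s(x, y)}).neighborSet z).Finite :=
    (hlf z).subset fun _ hb => hb.1
  have hx := finite_miiTailLengths (hlf' x)
  have hy := finite_miiTailLengths (hlf' y)
  refine (hfin.union ((hx.add hx).union (hy.add hy))).subset ?_
  rintro _ ⟨u, v, p, hp, rfl⟩
  by_cases hxp : x ∈ p.support
  · exact .inr (.inl (hp.length_mem_add hxp))
  by_cases hyp : y ∈ p.support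
  · exact .inr (.inr (hp.length_mem_add hyp))
  exact .inl (hp.length_mem_miiSpectrum_of_le (G.deleteEdges_le _) fun z hz =>
    neighborSet_deleteEdges_of_notMem (ne_of_mem_of_not_mem hz hxp) (ne_of_mem_of_not_mem hz hyp))

/-- deleting an edge from a locally finite graph with finite mii-spectrum
yields a graph with finite mii-spectrum. -/
theorem miiSpectrum_finite_deleteEdge (G : SimpleGraph V)
    (hlf : ∀ v, (G.neighborSet v).Finite)
    (e : Sym2 V) (he : e ∈ G.edgeSet)
    (hfin : (miiSpectrum G).Finite) :
    (miiSpectrum (G.deleteEdges {e})).Finite :=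
  miiSpectrum_finite_deleteEdge_general G hlf e hfin
end

section
/- Let G and F be locally finite connected graphs with F one-ended, and let ψ be a partial bijection from V(G) to V(F) with dom(ψ) infinite. Then the end space of the gluing sum G ⊕_ψ F is homeomorphic to the quotient of the end space Ω(G) obtained by collapsing the end-boundary ∂(dom(ψ)) to a single point. -/
open SimpleGraph

variable {V W U : Type*}

/-!
The embedding of `G` into `G ⊕_ψ F` induces a continuous map `Ψ` from `Ω(G)` to the end space of
the gluing sum. An end in `∂(dom ψ)` has infinitely many glued vertices in each of its components;
as `F` is one-ended, almost all of them lie in the component of the unique end of `F`, so `Ψ`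
collapses `∂(dom ψ)` to the image of that end. An end outside `∂(dom ψ)` eventually lives in a
component avoiding `dom ψ`, which is also a component of the gluing sum; hence `Ψ` is injective
there and misses the end of `F`. Each component of an end of the gluing sum has infinitely many
vertices on one side, so every end is approximated by images, and compactness of `Ω(G)` makes `Ψ`
onto. A continuous bijection from the compact quotient to the Hausdorff end space is a
homeomorphism.
-/

open Function Set

namespace SimpleGraph

instance (G : SimpleGraph V) (K : Set V) : DiscreteTopology (G.ComponentCompl K) := ⟨rfl⟩

namespace ComponentCompl

section Map

variable {G : SimpleGraph V} {H : SimpleGraph W} {φ : G →g H} {K L : Set V} {S T : Set W}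

def map (φ : G →g H) (hφ : MapsTo φ Kᶜ Sᶜ) (C : G.ComponentCompl K) : H.ComponentCompl S :=
  ConnectedComponent.map (induceHom φ hφ) C

theorem mem_map (hφ : MapsTo φ Kᶜ Sᶜ) {C : G.ComponentCompl K} {v : V} (hv : v ∈ C) :
    φ v ∈ C.map φ hφ := by
  obtain ⟨hvK, rfl⟩ := hv
  exact H.componentComplMk_mem _

theorem map_hom (hKL : K ⊆ L) (hST : S ⊆ T) (hφL : MapsTo φ Lᶜ Tᶜ) (hφK : MapsTo φ Kᶜ Sᶜ)
    (C : G.ComponentCompl L) : (C.map φ hφL).hom hST = (C.hom hKL).map φ hφK :=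
  C.ind fun _ _ => rfl

theorem eq_of_mem_of_mem {C C' : G.ComponentCompl K} {v : V} (hv : v ∈ C) (hv' : v ∈ C') :
    C = C' :=
  ComponentCompl.pairwise_disjoint.eq (not_disjoint_iff.mpr ⟨v, hv, hv'⟩)

theorem coe_map_of_forall_adj (hφ : MapsTo φ Kᶜ Sᶜ) (hφK : MapsTo φ K S) {C : G.ComponentCompl K}
    (hC : ∀ c ∈ C, ∀ y, H.Adj (φ c) y → ∃ u, G.Adj c u ∧ φ u = y) :
    (C.map φ hφ : Set W) = φ '' C := by
  refine Subset.antisymm ?_ (image_subset_iff.mpr fun _ => mem_map hφ)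
  induction C using ComponentCompl.ind with | @f c hcK => ?_
  rintro y ⟨hyS, hy⟩
  obtain ⟨p⟩ := ConnectedComponent.exact hy.symm
  suffices ∀ {a b : (Sᶜ : Set W)}, (H.induce Sᶜ).Walk a b →
      (a : W) ∈ φ '' (G.componentComplMk hcK) → (b : W) ∈ φ '' (G.componentComplMk hcK)
    from this p ⟨c, G.componentComplMk_mem hcK, rfl⟩
  intro a b q
  induction q with
  | nil => exact id
  | @cons a b _ hab _ ih =>
    rintro ⟨u, hu, hua⟩
    obtain ⟨u', huu', hu'b⟩ := hC u hu b (hua ▸ hab)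
    exact ih ⟨u', mem_of_adj u u' hu (fun hu'K => b.2 (hu'b ▸ hφK hu'K)) huu', hu'b⟩

end Map

theorem exists_infinite_inter {G : SimpleGraph V} [G.LocallyFinite] [Fact G.Preconnected]
    (K : Finset V) {T : Set V} (hT : T.Infinite) :
    ∃ C : G.ComponentCompl K, ((C : Set V) ∩ T).Infinite := by
  by_contra! h
  refine hT.sdiff K.finite_toSet ((finite_iUnion h).subset fun v ⟨hvT, hvK⟩ => ?_)
  exact mem_iUnion.mpr ⟨G.componentComplMk hvK, G.componentComplMk_mem hvK, hvT⟩

end ComponentCompl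

end SimpleGraph

namespace EndSpace

open SimpleGraph

section Basic

variable {G : SimpleGraph V}

@[ext]
theorem ext {e e' : EndSpace G} (h : ∀ K, e.1 K = e'.1 K) : e = e' :=
  Subtype.ext (funext h)

theorem apply_subset (e : EndSpace G) {K L : Finset V} (h : K ⊆ L) :
    (e.1 L : Set V) ⊆ e.1 K :=
  e.2 K L h ▸ (e.1 L).subset_hom _

theorem apply_eq_of_subset {e e' : EndSpace G} {K L : Finset V} (h : K ⊆ L)
    (hL : e.1 L = e'.1 L) : e.1 K = e'.1 K := by
  rw [← e.2 K L h, ← e'.2 K L h, hL]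

theorem infinite_apply (e : EndSpace G) (K : Finset V) : (e.1 K : Set V).Infinite :=
  (e.1 K).infinite_iff_in_all_ranges.mpr fun L h => ⟨e.1 L, e.2 K L h⟩

theorem exists_disjoint_of_notMem_endBoundary {e : EndSpace G} {T : Set V}
    (he : e ∉ endBoundary G T) : ∃ K, Disjoint (e.1 K : Set V) T := by
  classical
  obtain ⟨K, hK⟩ := not_forall.mp he
  have hfin := not_infinite.mp hK
  refine ⟨K ∪ hfin.toFinset, disjoint_left.mpr fun v hv hvT => (e.1 _).notMem_of_mem hv ?_⟩
  exact Finset.mem_coe.mpr <| Finset.mem_union_right _ <|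
    hfin.mem_toFinset.mpr ⟨e.apply_subset Finset.subset_union_left hv, hvT⟩

end Basic

section Topology

variable {G : SimpleGraph V}

theorem continuous_apply (K : Finset V) : Continuous fun e : EndSpace G => e.1 K :=
  (_root_.continuous_apply K).comp continuous_subtype_val

instance : T2Space (EndSpace G) := by
  unfold EndSpace; infer_instance

instance [G.LocallyFinite] [Fact G.Preconnected] : CompactSpace (EndSpace G) := by
  have : IsClosed {f : ∀ K : Finset V, G.ComponentCompl K |
      ∀ (K L : Finset V) (h : K ⊆ L), (f L).hom (by exact_mod_cast h) = f K} := by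
    simp only [ofPred_forall]
    exact isClosed_iInter fun K => isClosed_iInter fun L => isClosed_iInter fun _ =>
      isClosed_eq (continuous_of_discreteTopology.comp (_root_.continuous_apply L))
        (_root_.continuous_apply K)
  exact isCompact_iff_compactSpace.mp this.isCompact

theorem mem_range_of_forall_exists_apply_eq {X : Type*} [TopologicalSpace X] [CompactSpace X]
    {f : X → EndSpace G} (hf : Continuous f) (e : EndSpace G)
    (he : ∀ K, ∃ x, (f x).1 K = e.1 K) : e ∈ range f := by
  classical
  have hclosed K : IsClosed {x | (f x).1 K = e.1 K} :=
    isClosed_eq ((continuous_apply K).comp hf) continuous_const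
  obtain ⟨x, hx⟩ := IsCompact.nonempty_iInter_of_directed_nonempty_isCompact_isClosed
    (fun K => {x | (f x).1 K = e.1 K})
    (fun K L => ⟨K ∪ L, fun _ hx => apply_eq_of_subset Finset.subset_union_left hx,
      fun _ hx => apply_eq_of_subset Finset.subset_union_right hx⟩)
    he (fun K => (hclosed K).isCompact) hclosed
  exact ⟨x, ext (mem_iInter.mp hx)⟩

end Topology

section Map

variable {G : SimpleGraph V} {H : SimpleGraph W}

theorem mapsTo_compl_preimage (φ : G →g H) (hφ : Injective φ) (S : Finset W) :
    MapsTo φ (S.preimage φ hφ.injOn : Set V)ᶜ (S : Set W)ᶜ :=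
  fun _ hv hφv => hv (Finset.mem_preimage.mpr hφv)

noncomputable def map (φ : G →g H) (hφ : Injective φ) (e : EndSpace G) : EndSpace H :=
  ⟨fun S => (e.1 (S.preimage φ hφ.injOn)).map φ (mapsTo_compl_preimage φ hφ S), fun S T hST => by
    have hpre := Finset.monotone_preimage hφ hST
    rw [ComponentCompl.map_hom (by exact_mod_cast hpre) _ _ (mapsTo_compl_preimage φ hφ S),
      e.2 _ _ hpre]⟩

variable (φ : G →g H) (hφ : Injective φ)

theorem mem_map_apply {e : EndSpace G} {S : Finset W} {v : V}
    (hv : v ∈ e.1 (S.preimage φ hφ.injOn)) : φ v ∈ (e.map φ hφ).1 S :=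
  ComponentCompl.mem_map _ hv

theorem coe_map_apply {e : EndSpace G} {S : Finset W}
    (he : ∀ c ∈ e.1 (S.preimage φ hφ.injOn), ∀ y, H.Adj (φ c) y → ∃ u, G.Adj c u ∧ φ u = y) :
    ((e.map φ hφ).1 S : Set W) = φ '' (e.1 (S.preimage φ hφ.injOn)) :=
  ComponentCompl.coe_map_of_forall_adj _ (fun _ hv => Finset.mem_preimage.mp hv) he

theorem continuous_map : Continuous (map φ hφ) :=
  (continuous_pi fun _ => continuous_of_discreteTopology.comp (continuous_apply _)).subtype_mk _

end Map

section Existence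

open CategoryTheory

variable {G : SimpleGraph V} [G.LocallyFinite] [Fact G.Preconnected]

/-- König's lemma, for the inverse system formed by the sets `P K`. -/
theorem exists_forall_mem (P : ∀ K : Finset V, Set (G.ComponentCompl K))
    (hne : ∀ K, (P K).Nonempty)
    (hhom : ∀ (K L : Finset V) (h : K ⊆ L), ∀ C ∈ P L, C.hom (by exact_mod_cast h) ∈ P K) :
    ∃ e : EndSpace G, ∀ K, e.1 K ∈ P K := by
  let Q : (Finset V)ᵒᵖ ⥤ Type _ :=
    { obj := fun K => P K.unop
      map := fun f => TypeCat.ofHom fun C => ⟨C.1.hom _, hhom _ _ (le_of_op_hom f) C.1 C.2⟩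
      map_id := fun _ => ConcreteCategory.hom_ext _ _ fun C => Subtype.ext C.1.hom_refl
      map_comp := fun f g => ConcreteCategory.hom_ext _ _ fun C => Subtype.ext
        (C.1.hom_trans (by exact_mod_cast le_of_op_hom f) (by exact_mod_cast le_of_op_hom g)) }
  have : ∀ K, Nonempty (Q.obj K) := fun K => (hne K.unop).to_subtype
  obtain ⟨s, hs⟩ := nonempty_sections_of_finite_inverse_system Q
  exact ⟨⟨fun K => (s (.op K)).1, fun K L h => congrArg Subtype.val (hs (opHomOfLE h))⟩,
    fun K => (s (.op K)).2⟩

variable (G) in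
theorem exists_mem_endBoundary {T : Set V} (hT : T.Infinite) : (endBoundary G T).Nonempty := by
  let P (K : Finset V) : Set (G.ComponentCompl K) := {C | ((C : Set V) ∩ T).Infinite}
  obtain ⟨e, he⟩ := exists_forall_mem P (fun K => ComponentCompl.exists_infinite_inter K hT)
    (fun _ _ _ C hC => hC.mono (inter_subset_inter_left _ (C.subset_hom _)))
  exact ⟨e, he⟩

end Existence

end EndSpace

theorem OneEnded.finite_compl_apply {F : SimpleGraph W} [F.LocallyFinite] [Fact F.Preconnected]
    (hF : OneEnded F) (e : EndSpace F) (K : Finset W) : ((e.1 K : Set W)ᶜ).Finite := by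
  by_contra hinf
  obtain ⟨e', he'⟩ := EndSpace.exists_mem_endBoundary F hinf
  obtain ⟨e₀, h₀⟩ := hF
  have h : ((e'.1 K : Set W) ∩ (e.1 K : Set W)ᶜ).Infinite := he' K
  rw [h₀ e', ← h₀ e, inter_compl_self] at h
  exact h finite_empty

theorem nonempty_homeomorph_quotient_collapseSetoid {X Y : Type*} [TopologicalSpace X]
    [CompactSpace X] [TopologicalSpace Y] [T2Space Y] {A : Set X} {f : X → Y} (hf : Continuous f)
    (hsurj : Surjective f) (hfib : ∀ a b, f a = f b ↔ a = b ∨ a ∈ A ∧ b ∈ A) :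
    Nonempty (Quotient (collapseSetoid A) ≃ₜ Y) := by
  let g : Quotient (collapseSetoid A) → Y := Quotient.lift f fun a b hab => (hfib a b).mpr hab
  have hg : Bijective g :=
    ⟨by rintro ⟨a⟩ ⟨b⟩ h; exact Quot.sound ((hfib a b).mp h), .of_comp (g := Quotient.mk _) hsurj⟩
  have hg' : Continuous (Equiv.ofBijective g hg) := hf.quotient_lift _
  exact ⟨hg'.homeoOfEquivCompactToT2⟩

namespace gluingSum

open EndSpace

variable {G : SimpleGraph V} {F : SimpleGraph W} {D : Set V} {ψ : V → W}

section Vertices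

open Classical in
theorem mk_eq_mk_iff {x y : V ⊕ W} :
    Quotient.mk (glueSetoid D ψ) x = Quotient.mk _ y ↔
      Sum.elim (fun v => if v ∈ D then .inr (ψ v) else .inl v) Sum.inr x =
        Sum.elim (fun v => if v ∈ D then .inr (ψ v) else (.inl v : V ⊕ W)) Sum.inr y :=
  Quotient.eq

theorem mk_inl_injective (hψ : InjOn ψ D) :
    Injective fun v : V => Quotient.mk (glueSetoid D ψ) (.inl v) := by
  intro u v h
  rw [mk_eq_mk_iff] at h
  by_cases hu : u ∈ D <;> by_cases hv : v ∈ D <;> simp [hu, hv] at h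
  exacts [hψ hu hv h, h]

theorem mk_inr_injective : Injective fun w : W => Quotient.mk (glueSetoid D ψ) (.inr w) :=
  fun _ _ h => by simpa [mk_eq_mk_iff] using h

variable (G F) in
noncomputable def inl (hψ : InjOn ψ D) : G →g gluingSum G F D ψ where
  toFun v := Quotient.mk _ (.inl v)
  map_rel' h :=
    ⟨fun he => h.ne (mk_inl_injective hψ he), .inl ⟨_, _, rfl, rfl, .inl ⟨_, _, rfl, rfl, h⟩⟩⟩

variable (G F D ψ) in
noncomputable def inr : F →g gluingSum G F D ψ where
  toFun w := Quotient.mk _ (.inr w)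
  map_rel' h :=
    ⟨fun he => h.ne (mk_inr_injective he), .inl ⟨_, _, rfl, rfl, .inr ⟨_, _, rfl, rfl, h⟩⟩⟩

theorem inl_injective (hψ : InjOn ψ D) : Injective (inl G F hψ) :=
  mk_inl_injective hψ

theorem inr_injective : Injective (inr G F D ψ) :=
  mk_inr_injective

theorem inl_eq_inr_iff (hψ : InjOn ψ D) {v : V} {w : W} :
    inl G F hψ v = inr G F D ψ w ↔ v ∈ D ∧ ψ v = w := by
  change Quotient.mk _ _ = Quotient.mk _ _ ↔ _
  rw [mk_eq_mk_iff]
  by_cases hv : v ∈ D <;> simp [hv]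

theorem range_inl_union_range_inr (hψ : InjOn ψ D) :
    range (inl G F hψ) ∪ range (inr G F D ψ) = univ := by
  refine eq_univ_of_forall fun q => Quotient.inductionOn q ?_
  rintro (v | w)
  exacts [.inl ⟨v, rfl⟩, .inr ⟨w, rfl⟩]

theorem exists_adj_of_adj_inl (hψ : InjOn ψ D) {c : V} (hc : c ∉ D) {y : Quotient (glueSetoid D ψ)}
    (h : (gluingSum G F D ψ).Adj (inl G F hψ c) y) : ∃ u, G.Adj c u ∧ inl G F hψ u = y := by
  obtain ⟨-, ⟨x, z, hx, rfl, hxz⟩ | ⟨x, z, rfl, hz, hxz⟩⟩ := (fromRel_adj _ _ _).mp h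
  · rcases hxz with ⟨a, b, rfl, rfl, hab⟩ | ⟨a, b, rfl, rfl, -⟩
    · exact ⟨b, inl_injective hψ hx ▸ hab, rfl⟩
    · exact absurd ((inl_eq_inr_iff hψ).mp hx).1 hc
  · rcases hxz with ⟨a, b, rfl, rfl, hab⟩ | ⟨a, b, rfl, rfl, -⟩
    · exact ⟨a, inl_injective hψ hz ▸ hab.symm, rfl⟩
    · exact absurd ((inl_eq_inr_iff hψ).mp hz).1 hc

end Vertices

section Ends

theorem map_inl_eq_map_inr_of_mem_endBoundary [F.LocallyFinite] [Fact F.Preconnected]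
    (hF : OneEnded F) (hψ : InjOn ψ D) (e₀ : EndSpace F) {e : EndSpace G}
    (he : e ∈ endBoundary G D) :
    e.map (inl G F hψ) (inl_injective hψ) = e₀.map (inr G F D ψ) inr_injective := by
  ext1 S
  set C₀ := e₀.1 (S.preimage (inr G F D ψ) inr_injective.injOn)
  have hfin : (D ∩ ψ ⁻¹' (C₀ : Set W)ᶜ).Finite :=
    .of_finite_image ((hF.finite_compl_apply e₀ _).subset (image_subset_iff.mpr fun _ hv => hv.2))
      (hψ.mono inter_subset_left)
  -- `e` meets `D` infinitely often, and `ψ` sends all but finitely many of these points into `C₀`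
  obtain ⟨v, ⟨hvC, hvD⟩, hv⟩ := ((he _).sdiff hfin).nonempty
  have hψv : ψ v ∈ C₀ := by_contra fun h => hv ⟨hvD, h⟩
  refine ComponentCompl.eq_of_mem_of_mem (mem_map_apply _ _ hvC) ?_
  rw [(inl_eq_inr_iff hψ).mpr ⟨hvD, rfl⟩]
  exact mem_map_apply _ _ hψv

theorem coe_map_inl_apply_map (hψ : InjOn ψ D) {e : EndSpace G} {M : Finset V}
    (hM : Disjoint (e.1 M : Set V) D) :
    ((e.map (inl G F hψ) (inl_injective hψ)).1 (M.map ⟨inl G F hψ, inl_injective hψ⟩) : Set _) =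
      inl G F hψ '' (e.1 M) := by
  have hpre : (M.map ⟨inl G F hψ, inl_injective hψ⟩).preimage (inl G F hψ)
      (inl_injective hψ).injOn = M :=
    Finset.preimage_map _ M
  have hC : ∀ c ∈ e.1 M, ∀ y, (gluingSum G F D ψ).Adj (inl G F hψ c) y →
      ∃ u, G.Adj c u ∧ inl G F hψ u = y :=
    fun c hc _ => exists_adj_of_adj_inl hψ (disjoint_left.mp hM hc)
  rw [coe_map_apply _ _ (by rwa [hpre]), hpre]

theorem map_inl_ne_map_inr_of_notMem_endBoundary (hψ : InjOn ψ D) {e : EndSpace G}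
    (he : e ∉ endBoundary G D) (e₀ : EndSpace F) :
    e.map (inl G F hψ) (inl_injective hψ) ≠ e₀.map (inr G F D ψ) inr_injective := by
  obtain ⟨M, hM⟩ := exists_disjoint_of_notMem_endBoundary he
  intro heq
  obtain ⟨w, hw⟩ :=
    (e₀.1 ((M.map ⟨inl G F hψ, inl_injective hψ⟩).preimage _ inr_injective.injOn)).nonempty
  obtain ⟨u, hu, huw⟩ : inr G F D ψ w ∈ inl G F hψ '' (e.1 M) := by
    rw [← coe_map_inl_apply_map hψ hM, heq]
    exact mem_map_apply _ _ hw
  exact disjoint_left.mp hM hu ((inl_eq_inr_iff hψ).mp huw).1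

theorem injOn_map_inl (hψ : InjOn ψ D) :
    InjOn (EndSpace.map (inl G F hψ) (inl_injective hψ)) (endBoundary G D)ᶜ := by
  classical
  intro e he e' he' heq
  obtain ⟨M₁, h₁⟩ := exists_disjoint_of_notMem_endBoundary he
  obtain ⟨M₂, h₂⟩ := exists_disjoint_of_notMem_endBoundary he'
  ext1 K
  let M := K ∪ M₁ ∪ M₂
  refine apply_eq_of_subset (L := M) (Finset.subset_union_left.trans Finset.subset_union_left) ?_
  have hM₁ : Disjoint (e.1 M : Set V) D := h₁.mono_left <|
    e.apply_subset (Finset.subset_union_right.trans Finset.subset_union_left)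
  have hM₂ : Disjoint (e'.1 M : Set V) D :=
    h₂.mono_left <| e'.apply_subset Finset.subset_union_right
  have himage : inl G F hψ '' (e.1 M) = inl G F hψ '' (e'.1 M) := by
    rw [← coe_map_inl_apply_map hψ hM₁, ← coe_map_inl_apply_map hψ hM₂, heq]
  exact ComponentCompl.coe_inj.mp ((inl_injective hψ).image_injective himage)

theorem exists_map_inl_apply_eq [G.LocallyFinite] [Fact G.Preconnected] [F.LocallyFinite]
    [Fact F.Preconnected] (hF : OneEnded F) (hψ : InjOn ψ D) (hD : D.Infinite)
    (h : EndSpace (gluingSum G F D ψ)) (S : Finset (Quotient (glueSetoid D ψ))) :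
    ∃ e : EndSpace G, (e.map (inl G F hψ) (inl_injective hψ)).1 S = h.1 S := by
  let X : Set (Quotient (glueSetoid D ψ)) := h.1 S
  have hX : X ⊆ inl G F hψ '' (inl G F hψ ⁻¹' X) ∪ inr G F D ψ '' (inr G F D ψ ⁻¹' X) := by
    rw [image_preimage_eq_inter_range, image_preimage_eq_inter_range, ← inter_union_distrib_left,
      range_inl_union_range_inr hψ, inter_univ]
  rcases infinite_union.mp ((h.infinite_apply S).mono hX) with hl | hr
  · obtain ⟨e, he⟩ := exists_mem_endBoundary G (hl.of_image _)
    obtain ⟨v, hvC, hvX⟩ := (he (S.preimage _ (inl_injective hψ).injOn)).nonempty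
    exact ⟨e, ComponentCompl.eq_of_mem_of_mem (mem_map_apply _ _ hvC) hvX⟩
  · obtain ⟨e₀, -⟩ := id hF
    obtain ⟨eb, heb⟩ := exists_mem_endBoundary G hD
    have hZ := hF.finite_compl_apply e₀ (S.preimage (inr G F D ψ) inr_injective.injOn)
    obtain ⟨w, hwX, hw⟩ := ((hr.of_image _).sdiff hZ).nonempty
    refine ⟨eb, ?_⟩
    rw [map_inl_eq_map_inr_of_mem_endBoundary hF hψ e₀ heb]
    exact ComponentCompl.eq_of_mem_of_mem (mem_map_apply _ _ (not_not.mp hw)) hwX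

end Ends

end gluingSum

open gluingSum in
/-- the end space of the gluing sum `G ⊕_ψ F` (with `F` one-ended and
`dom ψ` infinite) is homeomorphic to `Ω(G)` with the boundary of `dom ψ` collapsed. -/
theorem endSpace_gluingSum_homeomorph
    (G : SimpleGraph V) (F : SimpleGraph W)
    (hGlf : ∀ v, (G.neighborSet v).Finite) (hFlf : ∀ w, (F.neighborSet w).Finite)
    (hGc : G.Connected) (hFc : F.Connected) (hF1 : OneEnded F)
    (D : Set V) (ψ : V → W) (hψ : Set.InjOn ψ D) (hD : D.Infinite) :
    Nonempty (EndSpace (gluingSum G F D ψ) ≃ₜ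
      Quotient (collapseSetoid (endBoundary G D))) := by
  let : G.LocallyFinite := fun v => (hGlf v).fintype
  let : F.LocallyFinite := fun w => (hFlf w).fintype
  have : Fact G.Preconnected := ⟨hGc.preconnected⟩
  have : Fact F.Preconnected := ⟨hFc.preconnected⟩
  obtain ⟨e₀, -⟩ := id hF1
  have hΨ := EndSpace.continuous_map (inl G F hψ) (inl_injective hψ)
  refine .map Homeomorph.symm <| nonempty_homeomorph_quotient_collapseSetoid hΨ
    (fun h => EndSpace.mem_range_of_forall_exists_apply_eq hΨ h
      (exists_map_inl_apply_eq hF1 hψ hD h)) fun a b => ⟨fun hab => ?_, ?_⟩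
  · by_cases ha : a ∈ endBoundary G D <;> by_cases hb : b ∈ endBoundary G D
    · exact .inr ⟨ha, hb⟩
    · rw [map_inl_eq_map_inr_of_mem_endBoundary hF1 hψ e₀ ha] at hab
      exact absurd hab.symm (map_inl_ne_map_inr_of_notMem_endBoundary hψ hb e₀)
    · rw [map_inl_eq_map_inr_of_mem_endBoundary hF1 hψ e₀ hb] at hab
      exact absurd hab (map_inl_ne_map_inr_of_notMem_endBoundary hψ ha e₀)
    · exact .inl (injOn_map_inl hψ ha hb hab)
  · rintro (rfl | ⟨ha, hb⟩)
    · rfl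
    · rw [map_inl_eq_map_inr_of_mem_endBoundary hF1 hψ e₀ ha,
        map_inl_eq_map_inr_of_mem_endBoundary hF1 hψ e₀ hb]
end

section
/- The countably infinite regular tree T_∞ (in which every vertex has countably infinite degree) and the disjoint union of two copies of T_∞ are hypomorphic but not isomorphic. -/
open SimpleGraph

variable {V W U : Type*}

/-!
A countable tree in which every vertex has infinite degree is, up to an isomorphism sending the
empty list to any chosen root, the tree `listTree` of finite sequences of naturals: enumerate
the children of each vertex (its neighbours other than its parent) by `ℕ`. Deleting the root of
`listTree` leaves `ℵ₀` copies of `listTree`, indexed by the first step away from the root.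
Hence `T - v` is `ℵ₀ · T` for every `v`, and so is `(T ⊔ T) - x ≅ (T - v) ⊔ T`. Since `T` is
connected and `T ⊔ T` is not, they are not isomorphic.
-/

namespace SimpleGraph

lemma sumGraph_eq_sum (G : SimpleGraph V) (H : SimpleGraph W) : sumGraph G H = G ⊕g H := by
  ext (a | a) (b | b) <;> simp [sumGraph]

lemma hypomorphic_of_forall_iso_induce_ne {G : SimpleGraph V} {H : SimpleGraph W}
    {F : SimpleGraph U} (e : V ≃ W) (hG : ∀ v, Nonempty (G.induce {u | u ≠ v} ≃g F))
    (hH : ∀ w, Nonempty (H.induce {u | u ≠ w} ≃g F)) : Hypomorphic G H :=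
  ⟨e, fun v => (hG v).map2 (fun f g => f.trans g.symm) (hH (e v))⟩

def Iso.induceNe {G : SimpleGraph V} {H : SimpleGraph W} (e : G ≃g H) (v : V) :
    G.induce {u | u ≠ v} ≃g H.induce {w | w ≠ e v} where
  toEquiv := e.toEquiv.subtypeEquiv fun _ => e.injective.ne_iff.symm
  map_rel_iff' := e.map_rel_iff

def Iso.induceNeInl (G : SimpleGraph V) (H : SimpleGraph W) (v : V) :
    (G ⊕g H).induce {x | x ≠ Sum.inl v} ≃g G.induce {u | u ≠ v} ⊕g H where
  toEquiv := Equiv.subtypeSum.trans <| Equiv.sumCongr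
    (Equiv.subtypeEquivRight fun _ => Sum.inl_injective.ne_iff)
    (Equiv.subtypeUnivEquiv fun _ => Sum.inr_ne_inl)
  map_rel_iff' := by rintro ⟨a | a, _⟩ ⟨b | b, _⟩ <;> simp [Equiv.subtypeSum]

/-- `(⊥ : SimpleGraph ℕ).boxProd G` is the disjoint union of `ℵ₀` copies of `G`. -/
def Iso.boxProdBotSum (G : SimpleGraph V) :
    ((⊥ : SimpleGraph ℕ).boxProd G) ⊕g G ≃g (⊥ : SimpleGraph ℕ).boxProd G where
  toFun
    | .inl (i, x) => (i + 1, x)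
    | .inr x => (0, x)
  invFun
    | (0, x) => .inr x
    | (i + 1, x) => .inl (i, x)
  left_inv := by rintro (⟨i, x⟩ | x) <;> rfl
  right_inv := by rintro ⟨_ | i, x⟩ <;> rfl
  map_rel_iff' := by rintro (⟨i, x⟩ | x) (⟨j, y⟩ | y) <;> simp [boxProd_adj]

def listTree : SimpleGraph (List ℕ) where
  Adj a b := ∃ n, a = n :: b ∨ b = n :: a
  symm := ⟨fun _ _ ⟨n, h⟩ => ⟨n, h.symm⟩⟩
  loopless := ⟨fun a ⟨n, h⟩ => by simp at h⟩

lemma listTree_adj_append_singleton {a b : List ℕ} {i j : ℕ} :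
    listTree.Adj (a ++ [i]) (b ++ [j]) ↔ i = j ∧ listTree.Adj a b := by
  simp only [listTree, ← List.cons_append, List.append_singleton_inj]
  grind

def Iso.boxProdBotListTree :
    (⊥ : SimpleGraph ℕ).boxProd listTree ≃g listTree.induce {l | l ≠ []} where
  toFun p := ⟨p.2 ++ [p.1], by simp⟩
  invFun l := (l.1.getLast l.2, l.1.dropLast)
  left_inv p := by simp
  right_inv l := Subtype.ext (List.dropLast_append_getLast l.2)
  map_rel_iff' := by simp [boxProd_adj, listTree_adj_append_singleton, and_comm]

def IsChildEnumeration (T : SimpleGraph V) (E : V → V → ℕ → V) : Prop :=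
  ∀ u p, Function.Injective (E u p) ∧ Set.range (E u p) = T.neighborSet u \ {p}

lemma exists_isChildEnumeration [Countable V] {T : SimpleGraph V}
    (hdeg : ∀ v, (T.neighborSet v).Infinite) : ∃ E, IsChildEnumeration T E := by
  have henum (u p : V) :
      ∃ f : ℕ → V, Function.Injective f ∧ Set.range f = T.neighborSet u \ {p} := by
    have := ((hdeg u).sdiff (Set.finite_singleton p)).to_subtype
    obtain ⟨e⟩ := nonempty_equiv_of_countable (α := ℕ) (β := ↥(T.neighborSet u \ {p}))
    exact ⟨(↑) ∘ e, Subtype.val_injective.comp e.injective, by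
      rw [Set.range_comp, e.range_eq_univ, Set.image_univ, Subtype.range_coe]⟩
  choose E hE using henum
  exact ⟨E, hE⟩

/-- The entries of `l` are read from the last one, the first step away from the root `v`:
`vertexAt E v (n :: l)` is the `n`-th child of `vertexAt E v l`, whose parent is
`vertexAt E v l.tail`. The root counts as its own parent, so its children are all its
neighbours. -/
def vertexAt (E : V → V → ℕ → V) (v : V) : List ℕ → V
  | [] => v
  | [n] => E v v n
  | n :: m :: l => E (vertexAt E v (m :: l)) (vertexAt E v l) n

lemma vertexAt_cons (E : V → V → ℕ → V) (v : V) (n : ℕ) (l : List ℕ) :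
    vertexAt E v (n :: l) = E (vertexAt E v l) (vertexAt E v l.tail) n := by
  cases l <;> rfl

namespace IsChildEnumeration

variable {T : SimpleGraph V} {E : V → V → ℕ → V} (v : V)

lemma vertexAt_cons_mem (hE : IsChildEnumeration T E) (n : ℕ) (l : List ℕ) :
    vertexAt E v (n :: l) ∈ T.neighborSet (vertexAt E v l) \ {vertexAt E v l.tail} := by
  rw [vertexAt_cons, ← (hE _ _).2]
  exact ⟨n, rfl⟩

lemma adj_vertexAt_cons (hE : IsChildEnumeration T E) (n : ℕ) (l : List ℕ) :
    T.Adj (vertexAt E v l) (vertexAt E v (n :: l)) :=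
  (hE.vertexAt_cons_mem v n l).1

lemma vertexAt_cons_ne_tail (hE : IsChildEnumeration T E) (n : ℕ) (l : List ℕ) :
    vertexAt E v (n :: l) ≠ vertexAt E v l.tail :=
  (hE.vertexAt_cons_mem v n l).2

lemma exists_vertexAt_cons_eq (hE : IsChildEnumeration T E) {l : List ℕ} {x : V}
    (hx : T.Adj (vertexAt E v l) x) (hne : x ≠ vertexAt E v l.tail) :
    ∃ n, vertexAt E v (n :: l) = x := by
  have hmem : x ∈ Set.range (E (vertexAt E v l) (vertexAt E v l.tail)) := by
    rw [(hE _ _).2]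
    exact ⟨hx, hne⟩
  obtain ⟨n, hn⟩ := hmem
  exact ⟨n, by rw [vertexAt_cons, hn]⟩

def rootWalk (hE : IsChildEnumeration T E) : ∀ l, T.Walk (vertexAt E v l) v
  | [] => .nil
  | n :: l => .cons (hE.adj_vertexAt_cons v n l).symm (hE.rootWalk l)

lemma snd_rootWalk (hE : IsChildEnumeration T E) (l : List ℕ) :
    (hE.rootWalk v l).snd = vertexAt E v l.tail := by
  cases l
  · rfl
  · exact Walk.snd_cons _ _

lemma isPath_rootWalk (hE : IsChildEnumeration T E) (hT : T.IsAcyclic) :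
    ∀ l, (hE.rootWalk v l).IsPath
  | [] => .nil
  | n :: l => by
    have hp := hE.isPath_rootWalk hT l
    refine (Walk.cons_isPath_iff _ _).2 ⟨hp, fun hmem => hE.vertexAt_cons_ne_tail v n l ?_⟩
    rw [← hE.snd_rootWalk]
    exact hT.eq_snd_of_adj_start hp (hE.adj_vertexAt_cons v n l) hmem

lemma vertexAt_cons_ne_root (hE : IsChildEnumeration T E) (hT : T.IsAcyclic) (n : ℕ)
    (l : List ℕ) : vertexAt E v (n :: l) ≠ v := fun h =>
  ((Walk.cons_isPath_iff _ _).1 (hE.isPath_rootWalk v hT (n :: l))).2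
    (by rw [h]; exact (hE.rootWalk v l).end_mem_support)

lemma vertexAt_tail_eq_of_eq (hE : IsChildEnumeration T E) (hT : T.IsAcyclic) {l l' : List ℕ}
    (h : vertexAt E v l = vertexAt E v l') : vertexAt E v l.tail = vertexAt E v l'.tail := by
  have hq := (Walk.isPath_copy _ h.symm rfl).2 (hE.isPath_rootWalk v hT l')
  have hpq := (hT.subsingleton_path _ _).elim ⟨_, hE.isPath_rootWalk v hT l⟩ ⟨_, hq⟩
  simpa [snd_rootWalk] using congrArg (·.1.snd) hpq

lemma vertexAt_injective (hE : IsChildEnumeration T E) (hT : T.IsAcyclic) :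
    Function.Injective (vertexAt E v) := by
  intro l l' h
  induction l generalizing l' with
  | nil =>
    cases l' with
    | nil => rfl
    | cons n l' => exact absurd h.symm (hE.vertexAt_cons_ne_root v hT n l')
  | cons n l ih =>
    cases l' with
    | nil => exact absurd h (hE.vertexAt_cons_ne_root v hT n l)
    | cons n' l' =>
      obtain rfl := ih (hE.vertexAt_tail_eq_of_eq v hT h)
      rw [vertexAt_cons, vertexAt_cons] at h
      rw [(hE _ _).1 h]

lemma exists_vertexAt_eq (hE : IsChildEnumeration T E) {x y : V} (p : T.Walk x y) (hy : y = v) :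
    ∃ l, vertexAt E v l = x := by
  induction p with
  | nil => exact ⟨[], hy.symm⟩
  | @cons x y z hxy p ih =>
    obtain ⟨l, rfl⟩ := ih hy
    by_cases hx : x = vertexAt E v l.tail
    · exact ⟨l.tail, hx.symm⟩
    · obtain ⟨n, hn⟩ := hE.exists_vertexAt_cons_eq v hxy.symm hx
      exact ⟨n :: l, hn⟩

lemma adj_vertexAt_iff (hE : IsChildEnumeration T E) (hT : T.IsAcyclic) {a b : List ℕ} :
    T.Adj (vertexAt E v a) (vertexAt E v b) ↔ listTree.Adj a b := by
  refine ⟨fun hab => ?_, ?_⟩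
  · by_cases hb : vertexAt E v b = vertexAt E v a.tail
    · obtain rfl := hE.vertexAt_injective v hT hb
      cases a with
      | nil => exact absurd rfl hab.ne
      | cons m t => exact ⟨m, .inl rfl⟩
    · obtain ⟨n, hn⟩ := hE.exists_vertexAt_cons_eq v hab hb
      exact ⟨n, .inr (hE.vertexAt_injective v hT hn).symm⟩
  · rintro ⟨n, rfl | rfl⟩
    exacts [(hE.adj_vertexAt_cons v n b).symm, hE.adj_vertexAt_cons v n a]

end IsChildEnumeration

theorem IsTree.exists_iso_listTree [Countable V] {T : SimpleGraph V} (hT : T.IsTree)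
    (hdeg : ∀ v, (T.neighborSet v).Infinite) (v : V) : ∃ e : listTree ≃g T, e [] = v := by
  obtain ⟨E, hE⟩ := exists_isChildEnumeration hdeg
  have hsurj : Function.Surjective (vertexAt E v) := fun x =>
    hE.exists_vertexAt_eq v (hT.connected.preconnected x v).some rfl
  exact ⟨⟨.ofBijective _ ⟨hE.vertexAt_injective v hT.isAcyclic, hsurj⟩,
    hE.adj_vertexAt_iff v hT.isAcyclic⟩, rfl⟩

end SimpleGraph

/-- the countably infinite regular tree `T∞` and the disjoint union of two
copies of it are hypomorphic but not isomorphic. -/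
theorem tree_infinite_degree_hypomorphic_not_isomorphic {V : Type*} [Countable V]
    (T : SimpleGraph V) (hT : T.IsTree) (hdeg : ∀ v, (T.neighborSet v).Infinite) :
    Hypomorphic T (sumGraph T T) ∧ IsEmpty (T ≃g sumGraph T T) := by
  rw [sumGraph_eq_sum]
  obtain ⟨v⟩ := hT.connected.nonempty
  have : Infinite V := (hdeg v).to_subtype.of_injective _ Subtype.val_injective
  obtain ⟨e, -⟩ := hT.exists_iso_listTree hdeg v
  have hdel (u : V) :
      Nonempty (T.induce {w | w ≠ u} ≃g (⊥ : SimpleGraph ℕ).boxProd listTree) := by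
    obtain ⟨f, rfl⟩ := hT.exists_iso_listTree hdeg u
    exact ⟨(f.induceNe []).symm.trans Iso.boxProdBotListTree.symm⟩
  have hdelInl (u : V) : Nonempty ((T ⊕g T).induce {x | x ≠ .inl u} ≃g
      (⊥ : SimpleGraph ℕ).boxProd listTree) :=
    (hdel u).map fun f => (Iso.induceNeInl T T u).trans <|
      (f.sumCongr e.symm).trans (Iso.boxProdBotSum listTree)
  refine ⟨hypomorphic_of_forall_iso_induce_ne nonempty_equiv_of_countable.some hdel ?_,
    ⟨fun f => not_connected_sum (f.connected_iff.mp hT.connected)⟩⟩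
  rintro (u | u)
  exacts [hdelInl u, (hdelInl u).map (Iso.sumComm.induceNe (.inr u)).trans]
end

section
/- If F is a connected, locally finite, infinite graph, then the Cartesian product F × ℕ of F with a ray is one-ended. -/
open SimpleGraph

variable {V W U : Type*}

/-! Fix a finite `K ⊆ F × ℕ` and let `N` exceed every height occurring in `K`. Above `N` each level
`F × {n}` is a copy of the connected graph `F`, and the levels are joined by columns, so everything
above `N` lies in one component of the complement of `K`. An infinite component must reach above
`N`: otherwise it sits in finitely many levels, hence meets infinitely many columns, one of which
avoids `K` and leads upwards. So the complement of every finite set has exactly one infinite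
component, and hence the graph has exactly one end. -/

theorem oneEnded_of_existsUnique_infinite {G : SimpleGraph V}
    (h : ∀ K : Finset V, ∃! C : G.ComponentCompl K, C.supp.Infinite) : OneEnded G := by
  choose c hc huniq using h
  refine ⟨⟨c, fun K L hKL => huniq K _ ((c L).hom_infinite _ (hc L))⟩,
    fun e => Subtype.ext (funext fun K => huniq K _ ?_)⟩
  exact (e.1 K).infinite_iff_in_all_ranges.2 fun L hKL => ⟨e.1 L, e.2 K L hKL⟩

theorem componentComplMk_boxProd_eq_of_reachable {F : SimpleGraph V} {H : SimpleGraph W}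
    {K : Set (V × W)} {b : W} (hK : ∀ x, (x, b) ∉ K) {u w : V} (h : F.Reachable u w) :
    (F □ H).componentComplMk (hK u) = (F □ H).componentComplMk (hK w) := by
  obtain ⟨p⟩ := h
  induction p with
  | nil => rfl
  | cons hadj _ ih =>
    exact ((F □ H).componentComplMk_eq_of_adj _ _ (boxProd_adj_left.2 hadj)).trans ih

theorem componentComplMk_boxProd_rayGraph_eq_of_le {F : SimpleGraph V} {K : Set (V × ℕ)}
    {v : V} {a : ℕ} (hK : ∀ k ≥ a, (v, k) ∉ K) {b : ℕ} (hab : a ≤ b) :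
    (F □ rayGraph).componentComplMk (hK a le_rfl) =
      (F □ rayGraph).componentComplMk (hK b hab) := by
  induction b, hab using Nat.le_induction with
  | base => rfl
  | succ n han ih =>
    refine ih.trans ((F □ rayGraph).componentComplMk_eq_of_adj _ _ (boxProd_adj_right.2 ?_))
    simp [rayGraph]

theorem notMem_of_sup_snd_lt {K : Finset (V × ℕ)} {k : ℕ} (hk : K.sup Prod.snd < k) (v : V) :
    (v, k) ∉ (K : Set (V × ℕ)) := fun hvk =>
  (Finset.le_sup (f := Prod.snd) (Finset.mem_coe.1 hvk)).not_gt hk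

theorem componentComplMk_boxProd_rayGraph_eq_of_sup_snd_lt {F : SimpleGraph V}
    (hc : F.Preconnected) {K : Finset (V × ℕ)} {u w : V} {m n : ℕ}
    (hm : K.sup Prod.snd < m) (hn : K.sup Prod.snd < n) :
    (F □ rayGraph).componentComplMk (notMem_of_sup_snd_lt hm u) =
      (F □ rayGraph).componentComplMk (notMem_of_sup_snd_lt hn w) := by
  wlog hmn : m ≤ n generalizing u w m n
  · exact (this hn hm (le_of_not_ge hmn)).symm
  exact (componentComplMk_boxProd_eq_of_reachable (notMem_of_sup_snd_lt hm)
    (hc u w)).trans (componentComplMk_boxProd_rayGraph_eq_of_le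
      (fun k hk => notMem_of_sup_snd_lt (hm.trans_le hk) w) hmn)

theorem exists_mem_supp_sup_snd_lt_of_infinite {F : SimpleGraph V} {K : Finset (V × ℕ)}
    {C : (F □ rayGraph).ComponentCompl K} (hC : C.supp.Infinite) :
    ∃ p ∈ C.supp, K.sup Prod.snd < p.2 := by
  classical
  by_contra! hlow
  have hproj : (Prod.fst '' C.supp).Infinite := fun hfin =>
    hC ((hfin.prod (Set.finite_Iic (K.sup Prod.snd))).subset fun p hp => ⟨⟨p, hp, rfl⟩, hlow p hp⟩)
  obtain ⟨_, ⟨⟨v, k⟩, ⟨hvk, hmk⟩, rfl⟩, hv⟩ := hproj.exists_notMem_finset (K.image Prod.fst)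
  have hcol : ∀ j, (v, j) ∉ (K : Set (V × ℕ)) := fun j hj =>
    hv (Finset.mem_image.2 ⟨_, Finset.mem_coe.1 hj, rfl⟩)
  refine (hlow (v, K.sup Prod.snd + 1) ⟨hcol _, ?_⟩).not_gt (Nat.lt_succ_self _)
  rw [← hmk]
  exact (componentComplMk_boxProd_rayGraph_eq_of_le (fun j _ => hcol j)
    (hlow _ ⟨hvk, hmk⟩ |>.trans (Nat.le_succ _))).symm

theorem boxProd_ray_oneEnded_general (F : SimpleGraph V) (hc : F.Connected) :
    OneEnded (F.boxProd rayGraph) := by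
  obtain ⟨v₀⟩ := hc.nonempty
  have above (K : Finset (V × ℕ)) : K.sup Prod.snd < K.sup Prod.snd + 1 := Nat.lt_succ_self _
  refine oneEnded_of_existsUnique_infinite fun K =>
    ⟨(F □ rayGraph).componentComplMk (notMem_of_sup_snd_lt (above K) v₀), ?_, fun C hC => ?_⟩
  · refine ((Set.Ioi_infinite (K.sup Prod.snd)).image (Prod.mk_right_injective v₀).injOn).mono ?_
    rintro _ ⟨k, hk, rfl⟩
    exact ⟨notMem_of_sup_snd_lt hk v₀,
      componentComplMk_boxProd_rayGraph_eq_of_sup_snd_lt hc.preconnected hk (above K)⟩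
  · obtain ⟨p, ⟨hp, rfl⟩, hpK⟩ := exists_mem_supp_sup_snd_lt_of_infinite hC
    exact componentComplMk_boxProd_rayGraph_eq_of_sup_snd_lt hc.preconnected hpK (above K)

/-- if `F` is a connected, locally finite, infinite graph, then `F × ℕ` is
one-ended. -/
theorem boxProd_ray_oneEnded (F : SimpleGraph V) [Infinite V]
    (hc : F.Connected) (hlf : ∀ v, (F.neighborSet v).Finite) :
    OneEnded (F.boxProd rayGraph) :=
  boxProd_ray_oneEnded_general F hc
end

section
/- Let G be a locally finite connected graph, S ⊆ V(G) finite, and suppose G is the increasing union of connected one-ended subgraphs Gₙ such that each Gₙ₊₁ is an extension of Gₙ of infinite growth (every component of Gₙ₊₁ − Gₙ is infinite) with every infinite component of G − V(Gₙ) meeting Gₙ₊₁ − Gₙ in an infinite connected subgraph. Then G − S has exactly one infinite component; hence G is one-ended. -/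
open SimpleGraph

variable {V W U : Type*}

/-! Fix a finite `S` and a stage `n` with `S ⊆ A n`. Every infinite component `C` of `G - S`
contains an infinite connected set inside `A (n + 1)`: if `C` meets `A n` infinitely often, one
of the finitely many components of `G[A n] - S` does; otherwise `C \ A n` contains an infinite
connected piece, and the infinite component of `G - A n` around it meets `A (n + 1) \ A n` in
an infinite connected set. As `G[A (n + 1)]` is one-ended, all these sets lie in the unique
infinite component of `G[A (n + 1)] - S`, which is therefore contained in every infinite
component of `G - S`. For a locally finite connected graph, a unique infinite component outside
every finite set is the same as a unique end, by Kőnig's lemma. -/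

namespace SimpleGraph

variable {G : SimpleGraph V}

theorem ComponentCompl.supp_eq_image_val {K : Set V} (C : G.ComponentCompl K) :
    C.supp = Subtype.val '' ConnectedComponent.supp C := by
  ext v
  constructor
  · rintro ⟨hv, rfl⟩
    exact ⟨⟨v, hv⟩, rfl, rfl⟩
  · rintro ⟨⟨v, hv⟩, hC, rfl⟩
    exact ⟨hv, hC⟩

theorem ComponentCompl.supp_infinite_iff {K : Set V} (C : G.ComponentCompl K) :
    C.supp.Infinite ↔ (ConnectedComponent.supp C).Infinite := by
  rw [supp_eq_image_val, Set.infinite_image_iff Subtype.val_injective.injOn]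

namespace EndSpace

theorem supp_infinite (e : EndSpace G) (K : Finset V) : (e.1 K).supp.Infinite :=
  (e.1 K).infinite_iff_in_all_ranges.mpr fun L h => ⟨e.1 L, e.2 K L h⟩

open CategoryTheory in
/-- Kőnig's lemma: the infinite components are the eventual ranges of the inverse system of
components, and a finite nonempty surjective inverse system has sections through every point. -/
theorem exists_eq_of_supp_infinite (hlf : ∀ v, (G.neighborSet v).Finite)
    (hG : G.Preconnected) {K : Finset V} {C : G.ComponentCompl K} (hC : C.supp.Infinite) :
    ∃ e : EndSpace G, e.1 K = C := by
  have : G.LocallyFinite := fun v => (hlf v).fintype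
  have : Fact G.Preconnected := ⟨hG⟩
  have : Infinite V := @Infinite.of_injective _ _ hC.to_subtype _ Subtype.val_injective
  let F := G.componentComplFunctor
  have : ∀ j, Nonempty (F.obj j) := fun j => G.componentCompl_nonempty_of_infinite j.unop
  have : ∀ j, Finite (F.obj j) := fun j => G.componentCompl_finite j.unop
  have hML : F.IsMittagLeffler :=
    F.isMittagLeffler_of_exists_finite_range fun j => ⟨j, 𝟙 j, Set.toFinite _⟩
  have := F.toEventualRanges_nonempty hML
  obtain ⟨s, hs⟩ := F.toEventualRanges.eval_section_surjective_of_surjective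
    (F.surjective_toEventualRanges hML) (Opposite.op K)
    ⟨C, (G.infinite_iff_in_eventualRange C).mp hC⟩
  exact ⟨⟨fun L => (s.1 (Opposite.op L)).1,
    fun L M h => congrArg Subtype.val (s.2 (opHomOfLE h))⟩, congrArg Subtype.val hs⟩

end EndSpace

theorem oneEnded_iff_existsUnique_supp_infinite (hlf : ∀ v, (G.neighborSet v).Finite)
    (hG : G.Preconnected) :
    OneEnded G ↔ ∀ K : Finset V,
      ∃! C : (G.induce (K : Set V)ᶜ).ConnectedComponent, C.supp.Infinite := by
  simp_rw [← ComponentCompl.supp_infinite_iff]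
  constructor
  · rintro ⟨e, he⟩ K
    refine ⟨e.1 K, e.supp_infinite K, fun C hC => ?_⟩
    obtain ⟨e', rfl⟩ := EndSpace.exists_eq_of_supp_infinite hlf hG hC
    rw [he e']
  · intro h
    choose C hC hCu using h
    refine ⟨⟨C, fun K L _ => hCu K _ (ComponentCompl.hom_infinite _ _ (hC L))⟩, fun e => ?_⟩
    exact Subtype.ext (funext fun K => hCu K _ (e.supp_infinite K))

theorem finite_neighborSet_induce (hlf : ∀ v, (G.neighborSet v).Finite) (X : Set V) (v : X) :
    ((G.induce X).neighborSet v).Finite :=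
  (hlf v).preimage Subtype.val_injective.injOn

def induceDiffIso (G : SimpleGraph V) (X S : Set V) :
    (G.induce X).induce (Subtype.val ⁻¹' S)ᶜ ≃g G.induce (X \ S) where
  toFun x := ⟨x.1.1, x.1.2, x.2⟩
  invFun y := ⟨⟨y.1, y.2.1⟩, y.2.2⟩
  left_inv _ := rfl
  right_inv _ := rfl
  map_rel_iff' := Iff.rfl

theorem finite_preimage_val_of_finite_inter {X S : Set V} (hS : (X ∩ S).Finite) :
    (Subtype.val ⁻¹' S : Set X).Finite :=
  (hS.preimage Subtype.val_injective.injOn).subset fun x hx => ⟨x.2, hx⟩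

theorem finite_connectedComponent_induce_diff (hlf : ∀ v, (G.neighborSet v).Finite)
    {X S : Set V} (hX : (G.induce X).Preconnected) (hS : (X ∩ S).Finite) :
    Finite (G.induce (X \ S)).ConnectedComponent := by
  have : (G.induce X).LocallyFinite := fun v => (finite_neighborSet_induce hlf X v).fintype
  have : Fact (G.induce X).Preconnected := ⟨hX⟩
  have hK := finite_preimage_val_of_finite_inter hS
  have := (G.induce X).componentCompl_finite hK.toFinset
  rw [hK.coe_toFinset] at this
  exact Finite.of_equiv _ (induceDiffIso G X S).connectedComponentEquiv

theorem existsUnique_supp_infinite_induce_diff (hlf : ∀ v, (G.neighborSet v).Finite)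
    {X S : Set V} (hX : (G.induce X).Preconnected) (hone : OneEnded (G.induce X))
    (hS : (X ∩ S).Finite) :
    ∃! C : (G.induce (X \ S)).ConnectedComponent, C.supp.Infinite := by
  have hK := finite_preimage_val_of_finite_inter hS
  have h := (oneEnded_iff_existsUnique_supp_infinite (finite_neighborSet_induce hlf X) hX).mp
    hone hK.toFinset
  rw [hK.coe_toFinset] at h
  let φ := induceDiffIso G X S
  refine (φ.connectedComponentEquiv.existsUnique_congr fun C => ?_).mp h
  rw [← Set.infinite_coe_iff, ← Set.infinite_coe_iff, (C.isoEquivSupp φ).infinite_iff]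

namespace ConnectedComponent

variable {Y : Set V}

theorem connected_induce_image_val_supp (C : (G.induce Y).ConnectedComponent) :
    (G.induce (Subtype.val '' C.supp)).Connected := by
  refine C.connected_toSimpleGraph.map ⟨fun x => ⟨x.1.1, x.1, x.2, rfl⟩, fun h => h⟩ ?_
  rintro ⟨_, y, hy, rfl⟩
  exact ⟨⟨y, hy⟩, rfl⟩

theorem subset_image_val_supp (C : (G.induce Y).ConnectedComponent) {s : Set V} (hsY : s ⊆ Y)
    (hs : (G.induce s).Preconnected) {v : V} (hvs : v ∈ s) (hvC : v ∈ Subtype.val '' C.supp) :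
    s ⊆ Subtype.val '' C.supp := by
  obtain ⟨w, hw, rfl⟩ := hvC
  intro u hu
  refine ⟨⟨u, hsY hu⟩, ?_, rfl⟩
  rw [mem_supp_iff, ← hw]
  exact ConnectedComponent.sound ((hs ⟨u, hu⟩ ⟨w, hvs⟩).map (G.induceHomOfLE hsY).toHom)

theorem eq_of_mem_image_val_supp {C C' : (G.induce Y).ConnectedComponent} {v : V}
    (hC : v ∈ Subtype.val '' C.supp) (hC' : v ∈ Subtype.val '' C'.supp) : C = C' := by
  obtain ⟨x, hx, rfl⟩ := hC
  obtain ⟨x', hx', hxx'⟩ := hC'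
  rw [← hx, ← hx', Subtype.ext hxx']

theorem exists_infinite_image_val_supp_inter [Finite (G.induce Y).ConnectedComponent]
    {T : Set V} (hT : (Y ∩ T).Infinite) :
    ∃ C : (G.induce Y).ConnectedComponent, (Subtype.val '' C.supp ∩ T).Infinite := by
  by_contra! h
  refine hT ((Set.finite_iUnion h).subset ?_)
  rintro v ⟨hvY, hvT⟩
  exact Set.mem_iUnion.mpr ⟨_, ⟨⟨v, hvY⟩, rfl, rfl⟩, hvT⟩

end ConnectedComponent

open ConnectedComponent

theorem exists_connected_infinite_subset_of_supp_infinite (hlf : ∀ v, (G.neighborSet v).Finite)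
    {X X' S : Set V} (hXX' : X ⊆ X') (hX : (G.induce X).Preconnected) (hS : S.Finite)
    (hSX : S ⊆ X) (hmeet : ∀ C : (G.induce Xᶜ).ConnectedComponent, C.supp.Infinite →
      ∃ D : Set V, D ⊆ Subtype.val '' C.supp ∩ (X' \ X) ∧ D.Infinite ∧
        (G.induce D).Connected)
    (C : (G.induce Sᶜ).ConnectedComponent) (hC : C.supp.Infinite) :
    ∃ D ⊆ Subtype.val '' C.supp, D ⊆ X' ∧ D.Infinite ∧ (G.induce D).Connected := by
  set Y := Subtype.val '' C.supp
  have hYS : Y ⊆ Sᶜ := Subtype.coe_image_subset _ _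
  by_cases hXY : (X ∩ Y).Infinite
  · -- then `C` meets one of the finitely many components of `G[X] - S` infinitely often
    have := finite_connectedComponent_induce_diff hlf hX (hS.subset Set.inter_subset_right)
    obtain ⟨E, hE⟩ := exists_infinite_image_val_supp_inter (G := G) (Y := X \ S) (T := Y)
      (hXY.mono fun v hv => ⟨⟨hv.1, hYS hv.2⟩, hv.2⟩)
    obtain ⟨v, hvE, hvY⟩ := hE.nonempty
    have hEX : Subtype.val '' E.supp ⊆ X \ S := Subtype.coe_image_subset _ _
    exact ⟨_, C.subset_image_val_supp (hEX.trans (Set.sdiff_subset_compl _ _))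
      E.connected_induce_image_val_supp.preconnected hvE hvY,
      fun v hv => hXX' (hEX hv).1, hE.mono Set.inter_subset_left,
      E.connected_induce_image_val_supp⟩
  · -- else some component of `G[Y] - X` is infinite, hence so is its component `F` in `G - X`
    rw [Set.not_infinite, Set.inter_comm] at hXY
    have := finite_connectedComponent_induce_diff hlf
      C.connected_induce_image_val_supp.preconnected hXY
    obtain ⟨E, hE⟩ := exists_infinite_image_val_supp_inter (G := G) (Y := Y \ X) (T := Set.univ)
      (((hC.image Subtype.val_injective.injOn).sdiff hXY).mono fun v hv =>
        ⟨⟨hv.1, fun hvX => hv.2 ⟨hv.1, hvX⟩⟩, trivial⟩)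
    obtain ⟨v, hvE, -⟩ := hE.nonempty
    have hEY : Subtype.val '' E.supp ⊆ Y \ X := Subtype.coe_image_subset _ _
    let F := (G.induce Xᶜ).connectedComponentMk ⟨v, (hEY hvE).2⟩
    have hEF : Subtype.val '' E.supp ⊆ Subtype.val '' F.supp :=
      F.subset_image_val_supp (fun w hw => (hEY hw).2)
        E.connected_induce_image_val_supp.preconnected hvE ⟨_, rfl, rfl⟩
    obtain ⟨D, hDF, hD, hDconn⟩ :=
      hmeet F ((hE.mono Set.inter_subset_left).mono hEF).of_image
    have hFY : Subtype.val '' F.supp ⊆ Y :=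
      C.subset_image_val_supp
        ((Subtype.coe_image_subset _ _).trans (Set.compl_subset_compl.mpr hSX))
        F.connected_induce_image_val_supp.preconnected (hEF hvE) (hEY hvE).1
    exact ⟨D, fun d hd => hFY (hDF hd).1, fun d hd => (hDF hd).2.1, hD, hDconn⟩

theorem existsUnique_supp_infinite_of_oneEnded_induce (hlf : ∀ v, (G.neighborSet v).Finite)
    {X S : Set V} (hX : (G.induce X).Preconnected) (hone : OneEnded (G.induce X))
    (hS : (X ∩ S).Finite)
    (hsub : ∀ C : (G.induce Sᶜ).ConnectedComponent, C.supp.Infinite →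
      ∃ D ⊆ Subtype.val '' C.supp, D ⊆ X ∧ D.Infinite ∧ (G.induce D).Connected) :
    ∃! C : (G.induce Sᶜ).ConnectedComponent, C.supp.Infinite := by
  obtain ⟨W, hW, hWu⟩ := existsUnique_supp_infinite_induce_diff hlf hX hone hS
  have hWS : Subtype.val '' W.supp ⊆ Sᶜ := fun v hv => (Subtype.coe_image_subset _ _ hv).2
  have hW_conn := W.connected_induce_image_val_supp.preconnected
  have subset_W : ∀ D ⊆ X \ S, D.Infinite → (G.induce D).Connected →
      D ⊆ Subtype.val '' W.supp := by
    intro D hDX hD hDconn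
    obtain ⟨d, hd⟩ := hD.nonempty
    let E := (G.induce (X \ S)).connectedComponentMk ⟨d, hDX hd⟩
    have hDE : D ⊆ Subtype.val '' E.supp :=
      E.subset_image_val_supp hDX hDconn.preconnected hd ⟨_, rfl, rfl⟩
    rwa [← hWu E (hD.mono hDE).of_image]
  have W_subset : ∀ C : (G.induce Sᶜ).ConnectedComponent, C.supp.Infinite →
      Subtype.val '' W.supp ⊆ Subtype.val '' C.supp := by
    intro C hC
    obtain ⟨D, hDC, hDX, hD, hDconn⟩ := hsub C hC
    have hDS : D ⊆ Sᶜ := hDC.trans (Subtype.coe_image_subset _ _)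
    obtain ⟨d, hd⟩ := hD.nonempty
    exact C.subset_image_val_supp hWS hW_conn
      (subset_W D (fun x hx => ⟨hDX hx, hDS hx⟩) hD hDconn hd) (hDC hd)
  obtain ⟨w, hw⟩ := hW.nonempty
  let C := (G.induce Sᶜ).connectedComponentMk ⟨w.1, w.2.2⟩
  have hWC : Subtype.val '' W.supp ⊆ Subtype.val '' C.supp :=
    C.subset_image_val_supp hWS hW_conn ⟨w, hw, rfl⟩ ⟨_, rfl, rfl⟩
  refine ⟨C, ((hW.image Subtype.val_injective.injOn).mono hWC).of_image, fun C' hC' => ?_⟩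
  exact eq_of_mem_image_val_supp (W_subset C' hC' ⟨w, hw, rfl⟩) (hWC ⟨w, hw, rfl⟩)

end SimpleGraph

theorem oneEnded_of_increasing_union_general (G : SimpleGraph V)
    (hlf : ∀ v, (G.neighborSet v).Finite) (hc : G.Connected)
    (A : ℕ → Set V) (hA : Monotone A) (hAu : ⋃ n, A n = Set.univ)
    (hconn : ∀ n, (G.induce (A n)).Connected)
    (hone : ∀ n, OneEnded (G.induce (A n)))
    (hmeet : ∀ n, ∀ C : (G.induce (A n)ᶜ).ConnectedComponent, C.supp.Infinite →
      ∃ D : Set V, D ⊆ (Subtype.val '' C.supp) ∩ (A (n + 1) \ A n) ∧ D.Infinite ∧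
        (G.induce D).Connected) :
    (∀ S : Finset V, ∃! C : (G.induce ((S : Set V))ᶜ).ConnectedComponent, C.supp.Infinite)
      ∧ OneEnded G := by
  have hunique : ∀ S : Finset V,
      ∃! C : (G.induce (S : Set V)ᶜ).ConnectedComponent, C.supp.Infinite := by
    intro S
    obtain ⟨n, hSn⟩ := hA.directed_le.exists_mem_subset_of_finset_subset_biUnion
      (hAu ▸ Set.subset_univ (S : Set V))
    refine existsUnique_supp_infinite_of_oneEnded_induce hlf (hconn (n + 1)).preconnected
      (hone (n + 1)) (S.finite_toSet.subset Set.inter_subset_right) fun C hC => ?_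
    exact exists_connected_infinite_subset_of_supp_infinite hlf (hA n.le_succ)
      (hconn n).preconnected S.finite_toSet hSn (hmeet n) C hC
  exact ⟨hunique, (oneEnded_iff_existsUnique_supp_infinite hlf hc.preconnected).mpr hunique⟩

/-- a locally finite connected graph which is an increasing union of
connected one-ended subgraphs with infinite growth (and whose infinite components outside
each stage meet the next stage in an infinite connected subgraph) has exactly one infinite
component after removing any finite set; hence it is one-ended. -/
theorem oneEnded_of_increasing_union (G : SimpleGraph V)
    (hlf : ∀ v, (G.neighborSet v).Finite) (hc : G.Connected)
    (A : ℕ → Set V) (hA : Monotone A) (hAu : ⋃ n, A n = Set.univ)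
    (hconn : ∀ n, (G.induce (A n)).Connected)
    (hone : ∀ n, OneEnded (G.induce (A n)))
    (hgrowth : ∀ n, ∀ C : (G.induce (A (n + 1) \ A n)).ConnectedComponent, C.supp.Infinite)
    (hmeet : ∀ n, ∀ C : (G.induce (A n)ᶜ).ConnectedComponent, C.supp.Infinite →
      ∃ D : Set V, D ⊆ (Subtype.val '' C.supp) ∩ (A (n + 1) \ A n) ∧ D.Infinite ∧
        (G.induce D).Connected) :
    (∀ S : Finset V, ∃! C : (G.induce ((S : Set V))ᶜ).ConnectedComponent, C.supp.Infinite)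
      ∧ OneEnded G :=
  oneEnded_of_increasing_union_general G hlf hc A hA hAu hconn hone hmeet
end
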